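/- Green's function representation of the inhomogeneous flux: let a < c, h = c − a, m = (a+c)/2, let ε > 0, μ ≥ 0 and b ≠ 0 be constants with d = ε + μ b > 0, set P = b h / d, and let s : [a,c] → ℝ be continuous. Define the flux Green's function G(σ; P) = (1 − e^{−Pσ})/(1 − e^{−P}) for 0 ≤ σ ≤ 1/2 and G(σ; P) = −(1 − e^{P(1−σ)})/(1 − e^{P}) for 1/2 < σ ≤ 1. If φ ∈ C²([a,c]) satisfies −d φ'' + b φ' = s on (a,c), then the flux f = b φ − d φ' at the midpoint satisfies f(m) − (d/h)[ B(−P) φ(a) − B(P) φ(c) ] = h ∫_0^1 G(σ; P) s(a + σ h) dσ, where B(z) = z/(e^z − 1). -/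

import Mathlib

/-- Bernoulli function `B(z) = z / (e^z − 1)`. -/
noncomputable def Bern (z : ℝ) : ℝ := z / (Real.exp z - 1)

/-!
Since `f' = b φ' - d φ'' = s`, pairing with a weight `w` and integrating by parts gives
`∫ w s = [w f + d w' φ]` whenever `w` solves the adjoint equation `d w'' + b w' = 0`, whose
solutions are `A + B e^{-(b/d) x}`. On each half of the interval the Green's function is, in the
variable `x = a + σ h`, the adjoint solution vanishing at the outer endpoint and normalised so
that it jumps by `1` at the midpoint while its derivative is continuous there. The midpoint
terms therefore leave exactly `f(m)`, and the derivatives of the weights at the endpoints are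
`B(∓P)/h`.
-/

open Real Set MeasureTheory
open scoped Interval

theorem intervalIntegral.integral_eq_add_of_eqOn_uIoc {E : Type*} [NormedAddCommGroup E]
    [NormedSpace ℝ E] {μ : Measure ℝ} {F f g : ℝ → E} {α m β : ℝ}
    (hf : IntervalIntegrable f μ α m) (hg : IntervalIntegrable g μ m β)
    (hFf : EqOn F f (Ι α m)) (hFg : EqOn F g (Ι m β)) :
    ∫ x in α..β, F x ∂μ = (∫ x in α..m, f x ∂μ) + ∫ x in m..β, g x ∂μ := by
  rw [← intervalIntegral.integral_add_adjacent_intervals ((intervalIntegrable_congr hFf).2 hf)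
    ((intervalIntegrable_congr hFg).2 hg)]
  congr 1 <;> exact intervalIntegral.integral_congr_ae (.of_forall fun x hx => by simp_all [EqOn])

theorem Real.one_sub_exp_two_mul (t : ℝ) : 1 - exp (2 * t) = (1 - exp t) * (1 + exp t) := by
  rw [two_mul, exp_add]; ring

theorem Real.exp_neg_div_one_sub_exp_neg_two_mul (t : ℝ) :
    exp (-t) / (1 - exp (-(2 * t))) = -(exp t / (1 - exp (2 * t))) := by
  rcases eq_or_ne t 0 with rfl | ht
  · simp
  have h₁ : 1 - exp t ≠ 0 := by
    rw [sub_ne_zero, ne_comm, Ne, exp_eq_one_iff]; exact ht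
  have h₁' : exp t - 1 ≠ 0 := by rwa [← neg_sub, neg_ne_zero]
  have h₂ : 1 + exp t ≠ 0 := by positivity
  rw [← mul_neg, one_sub_exp_two_mul, one_sub_exp_two_mul, exp_neg]
  field_simp
  ring

theorem Real.one_sub_exp_neg_div_add_one_sub_exp_div {t : ℝ} (ht : t ≠ 0) :
    (1 - exp (-t)) / (1 - exp (-(2 * t))) + (1 - exp t) / (1 - exp (2 * t)) = 1 := by
  have h₁ : 1 - exp t ≠ 0 := by
    rw [sub_ne_zero, ne_comm, Ne, exp_eq_one_iff]; exact ht
  have h₂ : 1 - exp (-t) ≠ 0 := by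
    rw [sub_ne_zero, ne_comm, Ne, exp_eq_one_iff]; exact neg_ne_zero.2 ht
  rw [← mul_neg, one_sub_exp_two_mul, one_sub_exp_two_mul, div_mul_cancel_left₀ h₁,
    div_mul_cancel_left₀ h₂, exp_neg]
  field_simp
  ring

theorem Bern_neg (z : ℝ) : Bern (-z) = z / (1 - exp (-z)) := by
  rw [Bern, neg_div, ← div_neg, neg_sub]

/-- Lagrange's bilinear concomitant of the flux `b φ - d φ'` and a weight `w` with derivative `w'`. -/
noncomputable def concomitant (b d : ℝ) (φ w w' : ℝ → ℝ) (x : ℝ) : ℝ :=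
  w x * (b * φ x - d * deriv φ x) + d * w' x * φ x

theorem hasDerivAt_concomitant {b d x w'' : ℝ} {φ w w' : ℝ → ℝ} (hφ : ContDiff ℝ 2 φ)
    (hw : HasDerivAt w (w' x) x) (hw' : HasDerivAt w' w'' x) :
    HasDerivAt (concomitant b d φ w w')
      (w x * (b * deriv φ x - d * deriv (deriv φ) x) + (d * w'' + b * w' x) * φ x) x := by
  have hφ₁ : HasDerivAt φ (deriv φ x) x :=
    (hφ.differentiable (by norm_num) x).hasDerivAt
  have hφ₂ : HasDerivAt (deriv φ) (deriv (deriv φ) x) x :=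
    ((hφ.iterate_deriv' 1 1).differentiable (by norm_num) x).hasDerivAt
  refine ((hw.mul ((hφ₁.const_mul b).sub (hφ₂.const_mul d))).add
    ((hw'.const_mul d).mul hφ₁)).congr_deriv ?_
  simp only [Pi.sub_apply]
  ring

theorem integral_mul_eq_concomitant_sub {b d α β : ℝ} {φ w w' w'' s : ℝ → ℝ} (hαβ : α ≤ β)
    (hφ : ContDiff ℝ 2 φ) (hw : ∀ x, HasDerivAt w (w' x) x) (hw' : ∀ x, HasDerivAt w' (w'' x) x)
    (hadj : ∀ x, d * w'' x + b * w' x = 0) (hs : ContinuousOn s (Icc α β))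
    (hode : ∀ x ∈ Ioo α β, -d * deriv (deriv φ) x + b * deriv φ x = s x) :
    ∫ x in α..β, w x * s x = concomitant b d φ w w' β - concomitant b d φ w w' α := by
  have hW := fun x => hasDerivAt_concomitant (b := b) (d := d) hφ (hw x) (hw' x)
  refine intervalIntegral.integral_eq_sub_of_hasDerivAt_of_le hαβ
    (fun x _ => (hW x).continuousAt.continuousWithinAt) (fun x hx => ?_) ?_
  · exact (hW x).congr_deriv (by rw [hadj, ← hode x hx]; ring)
  · exact ((continuous_iff_continuousAt.2 fun x => (hw x).continuousAt).continuousOn.mul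
      hs).intervalIntegrable_of_Icc hαβ

/-- For `d k = b` these solve the adjoint equation `d w'' + b w' = 0`. -/
noncomputable def expWeight (k x₀ x : ℝ) : ℝ := 1 - exp (k * (x₀ - x))

noncomputable def expWeightDeriv (k x₀ x : ℝ) : ℝ := k * exp (k * (x₀ - x))

theorem hasDerivAt_expWeight (k x₀ x : ℝ) :
    HasDerivAt (expWeight k x₀) (expWeightDeriv k x₀ x) x := by
  have := (((hasDerivAt_id x).const_sub x₀).const_mul k).exp.const_sub 1
  exact this.congr_deriv (by simp only [expWeightDeriv, id]; ring)

theorem hasDerivAt_expWeightDeriv (k x₀ x : ℝ) :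
    HasDerivAt (expWeightDeriv k x₀) (-k * expWeightDeriv k x₀ x) x := by
  have := (((hasDerivAt_id x).const_sub x₀).const_mul k).exp.const_mul k
  exact this.congr_deriv (by simp only [expWeightDeriv, id]; ring)

theorem continuous_expWeight (k x₀ : ℝ) : Continuous (expWeight k x₀) := by
  unfold expWeight; fun_prop

theorem integral_const_mul_expWeight_mul {b d k x₀ α β A : ℝ} {φ s : ℝ → ℝ} (hk : d * k = b)
    (hαβ : α ≤ β) (hφ : ContDiff ℝ 2 φ) (hs : ContinuousOn s (Icc α β))
    (hode : ∀ x ∈ Ioo α β, -d * deriv (deriv φ) x + b * deriv φ x = s x) :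
    ∫ x in α..β, A * expWeight k x₀ x * s x =
      A * (concomitant b d φ (expWeight k x₀) (expWeightDeriv k x₀) β -
        concomitant b d φ (expWeight k x₀) (expWeightDeriv k x₀) α) := by
  simp only [mul_assoc, intervalIntegral.integral_const_mul]
  exact congrArg (A * ·) <| integral_mul_eq_concomitant_sub hαβ hφ (hasDerivAt_expWeight k x₀)
    (hasDerivAt_expWeightDeriv k x₀) (fun x => by linear_combination -expWeightDeriv k x₀ x * hk)
    hs hode

theorem mul_integral_comp_unitInterval (g s : ℝ → ℝ) (a c : ℝ) :
    (c - a) * ∫ σ in (0 : ℝ)..1, g σ * s (a + σ * (c - a)) =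
      ∫ x in a..c, g ((x - a) / (c - a)) * s x := by
  rcases eq_or_ne a c with rfl | hac
  · simp
  have key := intervalIntegral.mul_integral_comp_add_mul (a := 0) (b := 1)
    (f := fun x => g ((x - a) / (c - a)) * s x) (c - a) a
  simp only [mul_zero, add_zero, mul_one, add_sub_cancel, add_sub_cancel_left,
    mul_div_cancel_left₀ _ (sub_ne_zero.2 hac.symm)] at key
  simpa only [mul_comm (c - a)] using key

noncomputable def fluxGreen (P σ : ℝ) : ℝ :=
  if σ ≤ 1 / 2 then (1 - exp (-(P * σ))) / (1 - exp (-P))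
  else -((1 - exp (P * (1 - σ))) / (1 - exp P))

section FluxGreen

variable {a c k x : ℝ}

theorem fluxGreen_comp_of_le_midpoint (hac : a < c) (hx : x ≤ (a + c) / 2) :
    fluxGreen (k * (c - a)) ((x - a) / (c - a)) = (expWeight k a c)⁻¹ * expWeight k a x := by
  have hσ : (x - a) / (c - a) ≤ 1 / 2 := by rw [div_le_iff₀ (sub_pos.2 hac)]; linarith
  have hca : c - a ≠ 0 := sub_ne_zero.2 hac.ne'
  simp only [fluxGreen, if_pos hσ, expWeight]
  field_simp
  ring_nf

theorem fluxGreen_comp_of_midpoint_lt (hac : a < c) (hx : (a + c) / 2 < x) :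
    fluxGreen (k * (c - a)) ((x - a) / (c - a)) = -(expWeight k c a)⁻¹ * expWeight k c x := by
  have hσ : ¬ (x - a) / (c - a) ≤ 1 / 2 := by rw [div_le_iff₀ (sub_pos.2 hac)]; linarith
  have hca : c - a ≠ 0 := sub_ne_zero.2 hac.ne'
  simp only [fluxGreen, if_neg hσ, expWeight]
  field_simp
  ring_nf

end FluxGreen

theorem integral_fluxGreen_mul {b d k a c : ℝ} {φ s : ℝ → ℝ} (hk : d * k = b) (hac : a < c)
    (hφ : ContDiff ℝ 2 φ) (hs : ContinuousOn s (Icc a c))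
    (hode : ∀ x ∈ Ioo a c, -d * deriv (deriv φ) x + b * deriv φ x = s x) :
    ∫ x in a..c, fluxGreen (k * (c - a)) ((x - a) / (c - a)) * s x =
      (expWeight k a c)⁻¹ * (concomitant b d φ (expWeight k a) (expWeightDeriv k a) ((a + c) / 2) -
        concomitant b d φ (expWeight k a) (expWeightDeriv k a) a) +
      -(expWeight k c a)⁻¹ * (concomitant b d φ (expWeight k c) (expWeightDeriv k c) c -
        concomitant b d φ (expWeight k c) (expWeightDeriv k c) ((a + c) / 2)) := by
  have ham : a ≤ (a + c) / 2 := by linarith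
  have hmc : (a + c) / 2 ≤ c := by linarith
  have hs₁ := hs.mono (Icc_subset_Icc le_rfl hmc)
  have hs₂ := hs.mono (Icc_subset_Icc ham le_rfl)
  rw [← integral_const_mul_expWeight_mul hk ham hφ hs₁
      (fun x hx => hode x ⟨hx.1, hx.2.trans_le hmc⟩),
    ← integral_const_mul_expWeight_mul hk hmc hφ hs₂
      (fun x hx => hode x ⟨ham.trans_lt hx.1, hx.2⟩)]
  refine intervalIntegral.integral_eq_add_of_eqOn_uIoc ?_ ?_ (fun x hx => ?_) (fun x hx => ?_)
  · exact ((continuous_const.mul (continuous_expWeight k a)).continuousOn.mul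
      hs₁).intervalIntegrable_of_Icc ham
  · exact ((continuous_const.mul (continuous_expWeight k c)).continuousOn.mul
      hs₂).intervalIntegrable_of_Icc hmc
  · rw [uIoc_of_le ham] at hx
    rw [fluxGreen_comp_of_le_midpoint hac hx.2]
  · rw [uIoc_of_le hmc] at hx
    rw [fluxGreen_comp_of_midpoint_lt hac hx.1]

/-- The two weights differ by `1` at the midpoint (`one_sub_exp_neg_div_add_one_sub_exp_div`) and
have equal derivatives there (`exp_neg_div_one_sub_exp_neg_two_mul`). -/
theorem concomitant_expWeight_jump {b d k a c : ℝ} (φ : ℝ → ℝ) (hk : k ≠ 0) (hac : a ≠ c) :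
    (expWeight k a c)⁻¹ * (concomitant b d φ (expWeight k a) (expWeightDeriv k a) ((a + c) / 2) -
        concomitant b d φ (expWeight k a) (expWeightDeriv k a) a) +
      -(expWeight k c a)⁻¹ * (concomitant b d φ (expWeight k c) (expWeightDeriv k c) c -
        concomitant b d φ (expWeight k c) (expWeightDeriv k c) ((a + c) / 2)) =
      (b * φ ((a + c) / 2) - d * deriv φ ((a + c) / 2)) -
        d / (c - a) * (Bern (-(k * (c - a))) * φ a - Bern (k * (c - a)) * φ c) := by
  set t := k * (c - a) / 2
  have hca : c - a ≠ 0 := sub_ne_zero.2 hac.symm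
  have ht : t ≠ 0 := div_ne_zero (mul_ne_zero hk hca) two_ne_zero
  have hkt : k * (c - a) = 2 * t := by ring
  have hB₁ : d / (c - a) * Bern (-(2 * t)) = d * k / (1 - exp (-(2 * t))) := by
    rw [Bern_neg, ← hkt]; field_simp
  have hB₂ : d / (c - a) * Bern (2 * t) = -(d * k / (1 - exp (2 * t))) := by
    rw [Bern, ← neg_sub 1 (exp (2 * t)), div_neg, ← hkt]; field_simp
  have hexp : k * (a - (a + c) / 2) = -t ∧ k * (c - (a + c) / 2) = t ∧
      k * (a - c) = -(2 * t) ∧ k * (c - a) = 2 * t := by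
    refine ⟨?_, ?_, ?_, ?_⟩ <;> ring
  simp only [concomitant, expWeight, expWeightDeriv, hexp, sub_self, mul_zero, exp_zero]
  linear_combination (b * φ ((a + c) / 2) - d * deriv φ ((a + c) / 2)) *
      one_sub_exp_neg_div_add_one_sub_exp_div ht +
    d * k * φ ((a + c) / 2) * exp_neg_div_one_sub_exp_neg_two_mul t + φ a * hB₁ - φ c * hB₂

theorem flux_green_function_general (a c ε μ b : ℝ) (hac : a < c)
    (hb : b ≠ 0) (hd : 0 < ε + μ * b)
    (s : ℝ → ℝ) (hs : ContinuousOn s (Set.Icc a c))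
    (φ : ℝ → ℝ) (hφ : ContDiff ℝ 2 φ)
    (hode : ∀ x ∈ Set.Ioo a c,
      -(ε + μ * b) * iteratedDeriv 2 φ x + b * deriv φ x = s x) :
    let d := ε + μ * b
    let h := c - a
    let m := (a + c) / 2
    let P := b * h / d
    let G : ℝ → ℝ := fun σ =>
      if σ ≤ 1 / 2 then (1 - Real.exp (-(P * σ))) / (1 - Real.exp (-P))
      else -((1 - Real.exp (P * (1 - σ))) / (1 - Real.exp P))
    (b * φ m - d * deriv φ m) - d / h * (Bern (-P) * φ a - Bern P * φ c) =
      h * ∫ σ in (0 : ℝ)..1, G σ * s (a + σ * h) := by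
  intro d h m P G
  have hk : d * (b / d) = b := mul_div_cancel₀ b hd.ne'
  have hP : P = b / d * (c - a) := by simp only [P, h]; ring
  have hode' : ∀ x ∈ Ioo a c, -d * deriv (deriv φ) x + b * deriv φ x = s x := by
    simpa only [iteratedDeriv_succ, iteratedDeriv_zero] using hode
  rw [show G = fluxGreen P from rfl, mul_integral_comp_unitInterval, hP,
    integral_fluxGreen_mul hk hac hφ hs hode',
    concomitant_expWeight_jump φ (div_ne_zero hb hd.ne') hac.ne]

/-- Green's function representation of the inhomogeneous flux:
if `−d φ'' + b φ' = s` on `(a,c)` with constants `d = ε + μ b > 0`, `b ≠ 0`,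
then the flux `f = b φ − d φ'` at the midpoint `m = (a+c)/2` satisfies
`f(m) − (d/h)[B(−P) φ(a) − B(P) φ(c)] = h ∫_0^1 G(σ;P) s(a + σ h) dσ`,
where `G(σ;P) = (1 − e^{−Pσ})/(1 − e^{−P})` for `0 ≤ σ ≤ 1/2` and
`G(σ;P) = −(1 − e^{P(1−σ)})/(1 − e^{P})` for `1/2 < σ ≤ 1`. -/
theorem flux_green_function (a c ε μ b : ℝ) (hac : a < c)
    (hε : 0 < ε) (hμ : 0 ≤ μ) (hb : b ≠ 0) (hd : 0 < ε + μ * b)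
    (s : ℝ → ℝ) (hs : ContinuousOn s (Set.Icc a c))
    (φ : ℝ → ℝ) (hφ : ContDiff ℝ 2 φ)
    (hode : ∀ x ∈ Set.Ioo a c,
      -(ε + μ * b) * iteratedDeriv 2 φ x + b * deriv φ x = s x) :
    let d := ε + μ * b
    let h := c - a
    let m := (a + c) / 2
    let P := b * h / d
    let G : ℝ → ℝ := fun σ =>
      if σ ≤ 1 / 2 then (1 - Real.exp (-(P * σ))) / (1 - Real.exp (-P))
      else -((1 - Real.exp (P * (1 - σ))) / (1 - Real.exp P))
    (b * φ m - d * deriv φ m) - d / h * (Bern (-P) * φ a - Bern P * φ c) =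
      h * ∫ σ in (0 : ℝ)..1, G σ * s (a + σ * h) :=
  flux_green_function_general a c ε μ b hac hb hd s hs φ hφ hode
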